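/- Let R be a local commutative ring. An element f of R((t))^√ (a Laurent series over R whose negative-degree coefficients are nilpotent) is a unit of the ring R((t))^√ if and only if its constant coefficient f₀ is a unit of R. -/

import Mathlib

/-!
Modulo nilpotents, the constant coefficient is multiplicative on `R((t))^√`: every term of
`(f * g)₀` other than `f₀ * g₀` involves a coefficient of negative degree. Hence `f * g = 1` forces
`f₀ * g₀ ∈ 1 + nilradical R`. Conversely, `f` is the sum of its principal part, which is
nilpotent (finitely many terms with nilpotent coefficients), and of a power series with constant
term `f₀`, which is invertible in `R[[t]] ⊆ R((t))^√` once `f₀` is a unit.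
-/

/-- `R((t))^√`: the subring of `R((t))` consisting of Laurent series all of whose
coefficients in strictly negative degrees are nilpotent. -/
def sqrtLaurentSubring (R : Type*) [CommRing R] : Subring (LaurentSeries R) where
  carrier := {f | ∀ i : ℤ, i < 0 → IsNilpotent (f.coeff i)}
  zero_mem' := by
    intro i _
    simp [HahnSeries.coeff_zero]
  one_mem' := by
    intro i hi
    rw [HahnSeries.coeff_one, if_neg (by omega)]
    exact IsNilpotent.zero
  add_mem' := by
    intro f g hf hg i hi
    rw [HahnSeries.coeff_add]
    exact Commute.isNilpotent_add (Commute.all _ _) (hf i hi) (hg i hi)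
  neg_mem' := by
    intro f hf i hi
    rw [HahnSeries.coeff_neg]
    exact (hf i hi).neg
  mul_mem' := by
    intro f g hf hg i hi
    rw [HahnSeries.coeff_mul]
    refine isNilpotent_sum fun ij hij => ?_
    rw [Finset.mem_addAntidiagonal] at hij
    rcases lt_or_ge ij.1 0 with h1 | h1
    · exact (Commute.all _ _).isNilpotent_mul_right (hf ij.1 h1)
    · have h2 : ij.2 < 0 := by omega
      exact (Commute.all _ _).isNilpotent_mul_left (hg ij.2 h2)

open HahnSeries

theorem HahnSeries.isNilpotent_of_finite_support {Γ R : Type*} [AddCommMonoid Γ] [PartialOrder Γ]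
    [IsOrderedCancelAddMonoid Γ] [CommRing R] {x : HahnSeries Γ R} (hx : x.support.Finite)
    (hcoeff : ∀ i, IsNilpotent (x.coeff i)) : IsNilpotent x := by
  have hsum : x = ∑ i ∈ hx.toFinset, single i (x.coeff i) := by
    ext j
    rw [coeff_sum, Finset.sum_eq_single j (fun i _ hij => coeff_single_of_ne hij.symm)]
    · rw [coeff_single_same]
    · simp
  rw [hsum]
  refine isNilpotent_sum fun i _ => ?_
  obtain ⟨k, hk⟩ := hcoeff i
  exact ⟨k, by rw [single_pow, hk, single_eq_zero]⟩

theorem LaurentSeries.coe_mk_add_truncLT_zero {R : Type*} [CommRing R] (x : LaurentSeries R) :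
    ((PowerSeries.mk fun n => x.coeff n : PowerSeries R) : LaurentSeries R) + truncLT 0 x = x := by
  ext i
  rw [coeff_add, PowerSeries.coeff_coe, HahnSeries.coeff_truncLT]
  rcases lt_or_ge i 0 with hi | hi
  · simp [hi]
  · simp [hi.not_gt, Int.natAbs_of_nonneg hi]

namespace sqrtLaurentSubring

variable {R : Type*} [CommRing R]

theorem coe_powerSeries_mem (P : PowerSeries R) : (P : LaurentSeries R) ∈ sqrtLaurentSubring R :=
  fun i hi => by simp [PowerSeries.coeff_coe, hi]

noncomputable def ofPowerSeries : PowerSeries R →+* sqrtLaurentSubring R :=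
  (HahnSeries.ofPowerSeries ℤ R).codRestrict _ coe_powerSeries_mem

theorem truncLT_zero_mem {f : LaurentSeries R} (hf : f ∈ sqrtLaurentSubring R) :
    truncLT 0 f ∈ sqrtLaurentSubring R :=
  fun i hi => by simpa [coeff_truncLT_of_lt hi] using hf i hi

theorem isNilpotent_truncLT_zero {f : LaurentSeries R} (hf : f ∈ sqrtLaurentSubring R) :
    IsNilpotent (truncLT 0 f) := by
  refine isNilpotent_of_finite_support ((Set.finite_Ico f.order 0).subset fun i hi => ?_) fun i => ?_
  · rw [support_truncLT] at hi
    exact ⟨order_le_of_coeff_ne_zero hi.1, hi.2⟩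
  · rcases lt_or_ge i 0 with hi | hi
    · exact truncLT_zero_mem hf i hi
    · simp [coeff_truncLT_of_le hi]

theorem isNilpotent_coeff_zero_mul_sub {f g : LaurentSeries R} (hf : f ∈ sqrtLaurentSubring R)
    (hg : g ∈ sqrtLaurentSubring R) : IsNilpotent ((f * g).coeff 0 - f.coeff 0 * g.coeff 0) := by
  rw [← mem_nilradical, ← Ideal.Quotient.eq, coeff_mul, map_sum]
  refine Finset.sum_eq_single (0, 0) (fun ij hij hne => ?_) (fun h00 => ?_)
  · rw [Ideal.Quotient.eq_zero_iff_mem, mem_nilradical]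
    obtain ⟨-, -, hsum⟩ := Finset.mem_antidiagonal.mp hij
    rcases lt_or_gt_of_ne (fun h : ij.1 = 0 => hne (Prod.ext h (by simp_all))) with hneg | hpos
    · exact (Commute.all _ _).isNilpotent_mul_right (hf _ hneg)
    · exact (Commute.all _ _).isNilpotent_mul_left (hg _ (by omega))
  · by_cases h : f.coeff 0 = 0 <;> simp_all [Finset.mem_antidiagonal]

theorem isUnit_coeff_zero_of_isUnit {f : sqrtLaurentSubring R} (hf : IsUnit f) :
    IsUnit ((f : LaurentSeries R).coeff 0) := by
  obtain ⟨g, hfg⟩ := hf.exists_right_inv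
  have hnil := isNilpotent_coeff_zero_mul_sub f.2 g.2
  rw [← Subring.coe_mul, hfg, Subring.coe_one, coeff_one, if_pos rfl] at hnil
  have hunit := hnil.isUnit_one_sub
  rw [sub_sub_cancel] at hunit
  exact isUnit_of_mul_isUnit_left hunit

theorem isUnit_of_isUnit_coeff_zero {f : sqrtLaurentSubring R}
    (hf : IsUnit ((f : LaurentSeries R).coeff 0)) : IsUnit f := by
  set P : PowerSeries R := PowerSeries.mk fun n => (f : LaurentSeries R).coeff n
  have hP : IsUnit (ofPowerSeries P) := by
    refine IsUnit.map _ (PowerSeries.isUnit_iff_constantCoeff.mpr ?_)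
    simpa [P, ← PowerSeries.coeff_zero_eq_constantCoeff] using hf
  have hprincipal : IsNilpotent (⟨_, truncLT_zero_mem f.2⟩ : sqrtLaurentSubring R) :=
    (IsNilpotent.map_iff (f := (sqrtLaurentSubring R).subtype) Subtype.val_injective).mp
      (isNilpotent_truncLT_zero f.2)
  have hf_eq : f = ofPowerSeries P + ⟨_, truncLT_zero_mem f.2⟩ :=
    Subtype.ext (LaurentSeries.coe_mk_add_truncLT_zero _).symm
  rw [hf_eq]
  exact hprincipal.isUnit_add_left_of_commute hP (Commute.all _ _)

end sqrtLaurentSubring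

theorem isUnit_sqrtLaurent_iff (R : Type*) [CommRing R]
    (f : sqrtLaurentSubring R) :
    IsUnit f ↔ IsUnit ((f : LaurentSeries R).coeff 0) :=
  ⟨sqrtLaurentSubring.isUnit_coeff_zero_of_isUnit, sqrtLaurentSubring.isUnit_of_isUnit_coeff_zero⟩
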